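/- Let (X, μ) be a probability space, W a measurable space, p : W → X a measurable map, and m a finitely additive probability measure on the measurable subsets of W (so m(∅)=0, m(W)=1, m is nonnegative, and m(A ∪ B)=m(A)+m(B) for disjoint measurable A,B) which is equidistributed over p, i.e., m(p⁻¹(A)) = μ(A) for every measurable A ⊆ X. Then for every measurable set D ⊆ W, the set function A ↦ m(p⁻¹(A) ∩ D), defined on the measurable subsets of X, is countably additive; moreover, the resulting finite measure on X is absolutely continuous with respect to μ. -/

import Mathlib

open MeasureTheory

/-!
The set function `ν A := m (p⁻¹ A ∩ D)` is a nonnegative finitely additive set function on `X`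
dominated by the real-valued measure `μ.real`, by monotonicity of `m` and equidistribution. So is
`μ.real - ν`. A nonnegative finitely additive set function is countably
superadditive: `∑ ν (A n) ≤ ν (⋃ n, A n)`, and likewise for `μ.real - ν`. Adding the two
inequalities gives an equality, by countable additivity of `μ`, so both are equalities.
-/

structure IsFinitelyAdditiveMeasure {α : Type*} [MeasurableSpace α] (ν : Set α → ℝ) : Prop where
  empty : ν ∅ = 0
  nonneg : ∀ s, MeasurableSet s → 0 ≤ ν s
  union : ∀ s t, MeasurableSet s → MeasurableSet t → Disjoint s t → ν (s ∪ t) = ν s + ν t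

namespace IsFinitelyAdditiveMeasure

variable {α : Type*} [MeasurableSpace α] {ν : Set α → ℝ}

theorem mono (hν : IsFinitelyAdditiveMeasure ν) {s t : Set α} (hs : MeasurableSet s)
    (ht : MeasurableSet t) (hst : s ⊆ t) : ν s ≤ ν t := by
  have hsplit : ν t = ν s + ν (t \ s) := by
    rw [← hν.union s (t \ s) hs (ht.diff hs) disjoint_sdiff_self_right, Set.union_sdiff_cancel hst]
  linarith [hν.nonneg (t \ s) (ht.diff hs)]

theorem sum_eq_biUnion {ι : Type*} (hν : IsFinitelyAdditiveMeasure ν) {A : ι → Set α}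
    (hA : ∀ i, MeasurableSet (A i)) (hdisj : Pairwise (Function.onFun Disjoint A))
    (s : Finset ι) : ∑ i ∈ s, ν (A i) = ν (⋃ i ∈ s, A i) := by
  classical
  induction s using Finset.induction_on with
  | empty => simp [hν.empty]
  | insert i s his ih =>
    rw [Finset.sum_insert his, ih, Finset.set_biUnion_insert,
      hν.union _ _ (hA i) (Finset.measurableSet_biUnion s fun j _ => hA j)]
    exact Set.disjoint_iUnion₂_right.2 fun j hj => hdisj (ne_of_mem_of_not_mem hj his).symm

theorem summable_and_tsum_le (hν : IsFinitelyAdditiveMeasure ν) {A : ℕ → Set α}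
    (hA : ∀ n, MeasurableSet (A n)) (hdisj : Pairwise (Function.onFun Disjoint A)) :
    Summable (fun n => ν (A n)) ∧ ∑' n, ν (A n) ≤ ν (⋃ n, A n) := by
  have hpartial (N : ℕ) : ∑ n ∈ Finset.range N, ν (A n) ≤ ν (⋃ n, A n) := by
    rw [hν.sum_eq_biUnion hA hdisj]
    exact hν.mono (Finset.measurableSet_biUnion _ fun n _ => hA n) (MeasurableSet.iUnion hA)
      (Set.iUnion₂_subset_iUnion _ _)
  have hnonneg (n : ℕ) : 0 ≤ ν (A n) := hν.nonneg _ (hA n)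
  exact ⟨summable_of_sum_range_le hnonneg hpartial, Real.tsum_le_of_sum_range_le hnonneg hpartial⟩

theorem preimage_inter {β : Type*} [MeasurableSpace β] (hν : IsFinitelyAdditiveMeasure ν)
    {p : α → β} (hp : Measurable p) {D : Set α} (hD : MeasurableSet D) :
    IsFinitelyAdditiveMeasure fun A : Set β => ν (p ⁻¹' A ∩ D) where
  empty := by simpa using hν.empty
  nonneg A hA := hν.nonneg _ ((hp hA).inter hD)
  union A B hA hB hAB := by
    rw [Set.preimage_union, Set.union_inter_distrib_right]
    exact hν.union _ _ ((hp hA).inter hD) ((hp hB).inter hD)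
      (((hAB.preimage p).inter_left D).inter_right D)

theorem measureReal_sub (hν : IsFinitelyAdditiveMeasure ν) (μ : Measure α) [IsFiniteMeasure μ]
    (hle : ∀ s, MeasurableSet s → ν s ≤ μ.real s) :
    IsFinitelyAdditiveMeasure fun s => μ.real s - ν s where
  empty := by simp [hν.empty]
  nonneg s hs := sub_nonneg.2 (hle s hs)
  union s t hs ht hst := by
    rw [measureReal_union hst ht, hν.union s t hs ht hst]
    ring

theorem hasSum_of_le_measureReal (hν : IsFinitelyAdditiveMeasure ν) (μ : Measure α)
    [IsFiniteMeasure μ] (hle : ∀ s, MeasurableSet s → ν s ≤ μ.real s) {A : ℕ → Set α}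
    (hA : ∀ n, MeasurableSet (A n)) (hdisj : Pairwise (Function.onFun Disjoint A)) :
    HasSum (fun n => ν (A n)) (ν (⋃ n, A n)) := by
  obtain ⟨hνsum, hνle⟩ := hν.summable_and_tsum_le hA hdisj
  obtain ⟨hρsum, hρle⟩ := (hν.measureReal_sub μ hle).summable_and_tsum_le hA hdisj
  have hμ : ∑' n, μ.real (A n) = μ.real (⋃ n, A n) := by
    rw [measureReal_def, measure_iUnion hdisj hA,
      ENNReal.tsum_toReal_eq fun n => measure_ne_top μ _]
    rfl
  have htotal : ∑' n, ν (A n) + ∑' n, (μ.real (A n) - ν (A n)) = μ.real (⋃ n, A n) := by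
    rw [← Summable.tsum_add hνsum hρsum, ← hμ]
    simp
  exact hνsum.hasSum_iff.2 (by linarith)

end IsFinitelyAdditiveMeasure

theorem countably_additive_of_equidistributed_mean_general
    {X W : Type*} [MeasurableSpace X] [MeasurableSpace W]
    (μ : Measure X) [IsProbabilityMeasure μ]
    (p : W → X) (hp : Measurable p)
    (m : Set W → ℝ)
    (h_empty : m ∅ = 0)
    (h_nonneg : ∀ A : Set W, MeasurableSet A → 0 ≤ m A)
    (h_add : ∀ A B : Set W, MeasurableSet A → MeasurableSet B → Disjoint A B →
      m (A ∪ B) = m A + m B)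
    (h_equi : ∀ A : Set X, MeasurableSet A → m (p ⁻¹' A) = (μ A).toReal)
    (D : Set W) (hD : MeasurableSet D) :
    (∀ A : ℕ → Set X, (∀ n, MeasurableSet (A n)) → Pairwise (Function.onFun Disjoint A) →
      HasSum (fun n => m (p ⁻¹' (A n) ∩ D)) (m (p ⁻¹' (⋃ n, A n) ∩ D))) ∧
    (∀ A : Set X, MeasurableSet A → μ A = 0 → m (p ⁻¹' A ∩ D) = 0) := by
  have hm : IsFinitelyAdditiveMeasure m := ⟨h_empty, h_nonneg, h_add⟩
  have hν := hm.preimage_inter hp hD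
  have hle (A : Set X) (hA : MeasurableSet A) : m (p ⁻¹' A ∩ D) ≤ μ.real A := by
    rw [measureReal_def, ← h_equi A hA]
    exact hm.mono ((hp hA).inter hD) (hp hA) Set.inter_subset_left
  refine ⟨fun A hA hdisj => hν.hasSum_of_le_measureReal μ hle hA hdisj, fun A hA hμA => ?_⟩
  refine le_antisymm ?_ (hν.nonneg A hA)
  simpa [measureReal_def, hμA] using hle A hA

/-- If `m` is a finitely additive probability measure on the measurable subsets of `W`
which is equidistributed over a measurable map `p : W → X` to a probability space `(X, μ)`
(i.e. `m (p⁻¹ A) = μ A` for all measurable `A`), then for every measurable `D ⊆ W` the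
set function `A ↦ m (p⁻¹ A ∩ D)` is countably additive on measurable sets, and it is
absolutely continuous with respect to `μ`. -/
theorem countably_additive_of_equidistributed_mean
    {X W : Type*} [MeasurableSpace X] [MeasurableSpace W]
    (μ : Measure X) [IsProbabilityMeasure μ]
    (p : W → X) (hp : Measurable p)
    (m : Set W → ℝ)
    (h_empty : m ∅ = 0)
    (h_univ : m Set.univ = 1)
    (h_nonneg : ∀ A : Set W, MeasurableSet A → 0 ≤ m A)
    (h_add : ∀ A B : Set W, MeasurableSet A → MeasurableSet B → Disjoint A B →
      m (A ∪ B) = m A + m B)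
    (h_equi : ∀ A : Set X, MeasurableSet A → m (p ⁻¹' A) = (μ A).toReal)
    (D : Set W) (hD : MeasurableSet D) :
    (∀ A : ℕ → Set X, (∀ n, MeasurableSet (A n)) → Pairwise (Function.onFun Disjoint A) →
      HasSum (fun n => m (p ⁻¹' (A n) ∩ D)) (m (p ⁻¹' (⋃ n, A n) ∩ D))) ∧
    (∀ A : Set X, MeasurableSet A → μ A = 0 → m (p ⁻¹' A ∩ D) = 0) :=
  countably_additive_of_equidistributed_mean_general μ p hp m h_empty h_nonneg h_add h_equi D hD
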